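/- For r ≠ 1, r > 0, and m ≥ 1, the identity ∑_{i=1}^{m} [r^{m-i}(r-1)/(r^m-1)]·((r+1)/(r-1))·(i - (m+1)·(r^i-1)/(r^{m+1}-1)) = ((r+1)/(r-1))·[r/(r-1) - m(m+2)/(r^m-1) + (m+1)²/(r^{m+1}-1)] holds. -/

import Mathlib

/-!
Since `r ^ (m - i) * r ^ i = r ^ m`, after pulling out the factor
`(r + 1) / ((r ^ m - 1) * (r ^ (m + 1) - 1))` each summand is a linear combination of `i * r ^ (m - i)`,
`r ^ (m - i)` and a constant. The geometric sum `∑ r ^ (m - i)` and the arithmetico-geometric sum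
`∑ i * r ^ (m - i)` have closed forms, and the identity becomes one between rational functions of `r`.
-/

open Finset

section PowerSums

variable {R : Type*} [CommRing R]

theorem sum_Icc_mul_pow_sub_succ (f : ℕ → R) (r : R) (n : ℕ) :
    ∑ i ∈ Icc 1 (n + 1), f i * r ^ (n + 1 - i) = r * ∑ i ∈ Icc 1 n, f i * r ^ (n - i) + f (n + 1) := by
  rw [sum_Icc_succ_top (by omega), mul_sum, Nat.sub_self, pow_zero, mul_one]
  congr 1
  refine sum_congr rfl fun i hi => ?_
  rw [Nat.sub_add_comm (mem_Icc.mp hi).2, pow_succ]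
  ring

theorem sub_one_mul_sum_Icc_pow_sub (r : R) (m : ℕ) :
    (r - 1) * ∑ i ∈ Icc 1 m, r ^ (m - i) = r ^ m - 1 := by
  induction m with
  | zero => simp
  | succ n ih =>
    have h := sum_Icc_mul_pow_sub_succ (fun _ => (1 : R)) r n
    simp only [one_mul] at h
    rw [h]
    linear_combination r * ih

theorem sub_one_sq_mul_sum_Icc_mul_pow_sub (r : R) (m : ℕ) :
    (r - 1) ^ 2 * ∑ i ∈ Icc 1 m, (i : R) * r ^ (m - i) = r ^ (m + 1) - (m + 1) * r + m := by
  induction m with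
  | zero => simp
  | succ n ih =>
    rw [sum_Icc_mul_pow_sub_succ]
    push_cast
    linear_combination r * ih

end PowerSums

theorem stmt_19 (r : ℝ) (hr : 0 < r) (hr1 : r ≠ 1) (m : ℕ) (hm : 1 ≤ m) :
    ∑ i ∈ Finset.Icc 1 m,
        (r ^ (m - i) * (r - 1) / (r ^ m - 1)) *
        ((r + 1) / (r - 1) *
          ((i : ℝ) - ((m : ℝ) + 1) * (r ^ i - 1) / (r ^ (m + 1) - 1)))
      = (r + 1) / (r - 1) *
          (r / (r - 1) - (m : ℝ) * ((m : ℝ) + 2) / (r ^ m - 1)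
            + ((m : ℝ) + 1) ^ 2 / (r ^ (m + 1) - 1)) := by
  have hpow {n : ℕ} (hn : n ≠ 0) : r ^ n - 1 ≠ 0 :=
    sub_ne_zero.mpr fun h => hr1 ((pow_eq_one_iff_of_nonneg hr.le hn).mp h)
  have hsub : r - 1 ≠ 0 := sub_ne_zero.mpr hr1
  have hm0 : r ^ m - 1 ≠ 0 := hpow (by omega)
  have hm1 : r ^ (m + 1) - 1 ≠ 0 := hpow (by omega)
  set c := (r + 1) / ((r ^ m - 1) * (r ^ (m + 1) - 1)) with hc
  have hterm : ∀ i ∈ Icc 1 m,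
      (r ^ (m - i) * (r - 1) / (r ^ m - 1)) *
        ((r + 1) / (r - 1) * ((i : ℝ) - ((m : ℝ) + 1) * (r ^ i - 1) / (r ^ (m + 1) - 1)))
      = c * ((r ^ (m + 1) - 1) * ((i : ℝ) * r ^ (m - i)) + (m + 1) * r ^ (m - i)
          - (m + 1) * r ^ m) := by
    intro i hi
    have hsplit : r ^ (m - i) * r ^ i = r ^ m := by rw [← pow_add, Nat.sub_add_cancel (mem_Icc.mp hi).2]
    rw [hc]
    field_simp
    linear_combination -((m : ℝ) + 1) * hsplit
  rw [sum_congr rfl hterm, ← mul_sum, sum_sub_distrib, sum_add_distrib, ← mul_sum, ← mul_sum,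
    sum_const, Nat.card_Icc, Nat.add_sub_cancel, nsmul_eq_mul]
  have hA : ∑ i ∈ Icc 1 m, (i : ℝ) * r ^ (m - i) = (r ^ (m + 1) - (m + 1) * r + m) / (r - 1) ^ 2 := by
    rw [eq_div_iff (pow_ne_zero 2 hsub), mul_comm, sub_one_sq_mul_sum_Icc_mul_pow_sub]
  have hB : ∑ i ∈ Icc 1 m, r ^ (m - i) = (r ^ m - 1) / (r - 1) := by
    rw [eq_div_iff hsub, mul_comm, sub_one_mul_sum_Icc_pow_sub]
  rw [hA, hB, hc]
  field_simp
  ring
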